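/- Let G = (V,E) be a finite undirected multigraph and A, B ⊆ V². If two fourientations φ and φ' of G are cycle-cocycle equivalent, then φ is (A,B)-valid if and only if φ' is (A,B)-valid. -/

import Mathlib

/-!
Validity only depends on whether `p.2` reaches `p.1` in `G⃗(A,B;φ)` for the pairs `p ∈ A ∪ B`,
so it suffices that one reversal preserves these reachabilities. Reversing a directed cycle
preserves all of reachability: a 1-way arc of the cycle that disappears is bypassed by the
rest of the reversed cycle, and reversing the reversed cycle gives back `φ`. Reversing an
`(A,B)`-cocycle `V1` only changes edges crossing the cut; a path can cross it only out of `V1`,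
never back, so a path between two vertices on the same side, as the two ends of every pair
in `A ∪ B` are, never uses a changed edge.
-/

namespace SubgraphsVsOrientations

/-- The four possible configurations of an edge in a fourientation:
`zero` = 0-way, `forward`/`backward` = the two 1-way configurations (relative to
a reference direction of the edge), `two` = 2-way. -/
inductive Four : Type
  | zero | forward | backward | two
deriving DecidableEq

instance : Fintype Four :=
  ⟨{Four.zero, Four.forward, Four.backward, Four.two}, fun x => by cases x <;> simp⟩

variable {V E : Type*}

/-- Whether configuration `c` allows traversal of the edge in direction `b`
(`b = true` means from `src` to `tgt`). -/
def allows : Four → Bool → Prop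
  | Four.zero, _ => False
  | Four.forward, b => b = true
  | Four.backward, b => b = false
  | Four.two, _ => True

/-- An edge configuration is solid if it is 0-way or 2-way. -/
def IsSolid (c : Four) : Prop := c = Four.zero ∨ c = Four.two

/-- A configuration is 1-way if it is `forward` or `backward`. -/
def IsOneWay (c : Four) : Prop := c = Four.forward ∨ c = Four.backward

/-- Reversing a configuration: swaps the two 1-way configurations,
fixes 0-way and 2-way. -/
def flipFour : Four → Four
  | Four.forward => Four.backward
  | Four.backward => Four.forward
  | c => c

/-- The 1-way configuration corresponding to direction `b`. -/
def oneWayFour (b : Bool) : Four := if b then Four.forward else Four.backward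

/-- Tail of the arc `(e, b)` (the edge `e` traversed in direction `b`). -/
def arcTail (src tgt : E → V) (a : E × Bool) : V := if a.2 then src a.1 else tgt a.1

/-- Head of the arc `(e, b)`. -/
def arcHead (src tgt : E → V) (a : E × Bool) : V := if a.2 then tgt a.1 else src a.1

/-- One-step relation of the digraph `G⃗(A,B;φ)`: there is an arc from `x` to `y`, either
a traversable directed edge of the fourientation `φ`, or an extra arc from `A ∪ B`. -/
def arcStep (src tgt : E → V) (A B : Set (V × V)) (φ : E → Four) (x y : V) : Prop :=
  (∃ a : E × Bool, allows (φ a.1) a.2 ∧ arcTail src tgt a = x ∧ arcHead src tgt a = y)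
    ∨ (x, y) ∈ A ∪ B

/-- Reachability by a directed path in the digraph `G⃗(A,B;φ)`. -/
def reach (src tgt : E → V) (A B : Set (V × V)) (φ : E → Four) : V → V → Prop :=
  Relation.ReflTransGen (arcStep src tgt A B φ)

/-- A fourientation `φ` is `(A,B)`-valid: in `G⃗(A,B;φ)`, for every `(u,v) ∈ A` the vertex `v`
cannot reach `u`, and for every `(u,v) ∈ B` the vertex `v` can reach `u`. -/
def IsValid (src tgt : E → V) (A B : Set (V × V)) (φ : E → Four) : Prop :=
  (∀ p ∈ A, ¬ reach src tgt A B φ p.2 p.1) ∧ (∀ p ∈ B, reach src tgt A B φ p.2 p.1)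

/-- The set of solid edges of a fourientation. -/
def solidSet (φ : E → Four) : Set E := {e | IsSolid (φ e)}

/-- The fourientation associated to an orientation `σ : E → Bool` (every edge 1-way). -/
def toFour (σ : E → Bool) : E → Four := fun e => oneWayFour (σ e)

open Classical in
/-- The fourientation associated to a (spanning) subgraph `F ⊆ E`: edges of `F` are 2-way,
the other edges are 0-way. -/
noncomputable def toFourSub (F : Set E) : E → Four :=
  fun e => if e ∈ F then Four.two else Four.zero

/-- The arc `(e,b)` is the arc of a 1-way edge of `φ`. -/
def oneWayArc (φ : E → Four) (a : E × Bool) : Prop := φ a.1 = oneWayFour a.2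

/-- `Cyc(φ)`: the set of cyclic 1-way edges (arcs) of the fourientation `φ`, in the digraph
`G⃗(A,B;φ)`: the head of the arc can reach its tail. -/
def CycSet (src tgt : E → V) (A B : Set (V × V)) (φ : E → Four) : Set (E × Bool) :=
  {a | oneWayArc φ a ∧ reach src tgt A B φ (arcHead src tgt a) (arcTail src tgt a)}

/-- `Acy(φ)`: the set of acyclic 1-way edges (arcs) of the fourientation `φ`. -/
def AcySet (src tgt : E → V) (A B : Set (V × V)) (φ : E → Four) : Set (E × Bool) :=
  {a | oneWayArc φ a ∧ ¬ reach src tgt A B φ (arcHead src tgt a) (arcTail src tgt a)}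

/-- `l` is (the arc sequence of) a directed cycle: a nonempty closed chain of arcs
visiting no vertex twice. -/
def IsDirCycle (src tgt : E → V) (l : List (E × Bool)) : Prop :=
  ∃ h : l ≠ [],
    l.Chain' (fun a b => arcHead src tgt a = arcTail src tgt b) ∧
    arcHead src tgt (l.getLast h) = arcTail src tgt (l.head h) ∧
    (l.map (arcTail src tgt)).Nodup

/-- Reversing the directed cycle `l` in the fourientation `φ`: all 1-way edges on the cycle are
reversed, other edges (in particular 2-way edges of the cycle) are unchanged. -/
def revCyc [DecidableEq E] (φ : E → Four) (l : List (E × Bool)) : E → Four :=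
  fun e => if (e, true) ∈ l ∨ (e, false) ∈ l then flipFour (φ e) else φ e

/-- One cycle-reversal move: `ψ` is obtained from `φ` by reversing a directed cycle of `φ`. -/
def CycleStep (src tgt : E → V) [DecidableEq E] (φ ψ : E → Four) : Prop :=
  ∃ l, IsDirCycle src tgt l ∧ (∀ a ∈ l, allows (φ a.1) a.2) ∧ ψ = revCyc φ l

/-- The edge `e` crosses the cut given by `V1` (in either direction). -/
def edgeCrosses (src tgt : E → V) (V1 : Set V) (e : E) : Prop :=
  (src e ∈ V1 ∧ tgt e ∉ V1) ∨ (tgt e ∈ V1 ∧ src e ∉ V1)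

/-- The cut `V1 / V1ᶜ` defines a directed `(A,B)`-cocycle of `G⃗(A,B;φ)`: the set of arcs from
`V1` to `V1ᶜ` is nonempty, no arc of the digraph goes from `V1ᶜ` to `V1`, and no arc of
`A ∪ B` crosses the cut (in either direction). -/
def IsABCocycleCut (src tgt : E → V) (A B : Set (V × V)) (φ : E → Four) (V1 : Set V) : Prop :=
  (∃ a : E × Bool, allows (φ a.1) a.2 ∧ arcTail src tgt a ∈ V1 ∧ arcHead src tgt a ∉ V1) ∧
  (∀ a : E × Bool, allows (φ a.1) a.2 → ¬ (arcTail src tgt a ∉ V1 ∧ arcHead src tgt a ∈ V1)) ∧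
  (∀ p ∈ A ∪ B, ((p : V × V).1 ∈ V1 ↔ p.2 ∈ V1))

open Classical in
/-- Reversing the directed cocycle given by the cut `V1`: all 1-way edges crossing the cut are
reversed, other edges (in particular 0-way edges crossing the cut) are unchanged. -/
noncomputable def revCut (src tgt : E → V) (φ : E → Four) (V1 : Set V) : E → Four :=
  fun e => if edgeCrosses src tgt V1 e then flipFour (φ e) else φ e

/-- One cocycle-reversal move: `ψ` is obtained from `φ` by reversing a directed
`(A,B)`-cocycle of `φ`. -/
def CocycleStep (src tgt : E → V) (A B : Set (V × V)) (φ ψ : E → Four) : Prop :=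
  ∃ V1 : Set V, IsABCocycleCut src tgt A B φ V1 ∧ ψ = revCut src tgt φ V1

/-- One cycle- or cocycle-reversal move. -/
def CCStep (src tgt : E → V) (A B : Set (V × V)) [DecidableEq E] (φ ψ : E → Four) : Prop :=
  CycleStep src tgt φ ψ ∨ CocycleStep src tgt A B φ ψ

/-- `φ` contains no cycle (of the graph `G`) made entirely of 2-way edges. -/
def NoTwoWayCycle (src tgt : E → V) (φ : E → Four) : Prop :=
  ¬ ∃ l : List (E × Bool), IsDirCycle src tgt l ∧ (l.map Prod.fst).Nodup ∧
      ∀ a ∈ l, φ a.1 = Four.two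

/-- `φ` contains no `(A,B)`-cocycle (of the graph `G`) made entirely of 0-way edges:
there is no cut, not crossed by any arc of `A ∪ B`, crossed by at least one edge of `G`,
all of whose crossing edges are 0-way. -/
def NoZeroWayCocycle (src tgt : E → V) (A B : Set (V × V)) (φ : E → Four) : Prop :=
  ¬ ∃ V1 : Set V, (∃ e, edgeCrosses src tgt V1 e) ∧
      (∀ e, edgeCrosses src tgt V1 e → φ e = Four.zero) ∧
      (∀ p ∈ A ∪ B, ((p : V × V).1 ∈ V1 ↔ p.2 ∈ V1))

/-- The subgraph `F` contains no cycle (it is a forest). -/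
def NoCycleIn (src tgt : E → V) (F : Set E) : Prop :=
  ¬ ∃ l : List (E × Bool), IsDirCycle src tgt l ∧ (l.map Prod.fst).Nodup ∧ ∀ a ∈ l, a.1 ∈ F

/-- One undirected adjacency step in the graph `F ∪ A̲ ∪ B̲`. -/
def usym (src tgt : E → V) (A B : Set (V × V)) (F : Set E) (x y : V) : Prop :=
  (∃ e ∈ F, (src e = x ∧ tgt e = y) ∨ (src e = y ∧ tgt e = x)) ∨
  (∃ p ∈ A ∪ B, ((p : V × V) = (x, y) ∨ p = (y, x)))

/-- Connectivity (by undirected paths) in the graph `F ∪ A̲ ∪ B̲`. -/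
def ureach (src tgt : E → V) (A B : Set (V × V)) (F : Set E) : V → V → Prop :=
  Relation.ReflTransGen (usym src tgt A B F)

/-- The subgraph `F` is `(A,B)`-connected: the connected components of `F ∪ A̲ ∪ B̲`
coincide with those of `G ∪ A̲ ∪ B̲`. -/
def ABConnected (src tgt : E → V) (A B : Set (V × V)) (F : Set E) : Prop :=
  ∀ x y, ureach src tgt A B F x y ↔ ureach src tgt A B Set.univ x y

theorem _root_.Relation.ReflTransGen.lift_of_mem_iff {α : Type*} {r s : α → α → Prop}
    {W : Set α} (hW : ∀ x y, r x y → y ∈ W → x ∈ W)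
    (hrs : ∀ x y, r x y → (x ∈ W ↔ y ∈ W) → s x y) {x y : α}
    (h : Relation.ReflTransGen r x y) (hxy : x ∈ W ↔ y ∈ W) :
    Relation.ReflTransGen s x y := by
  -- A path can leave `W` but never re-enter it, so a path between two points on the same
  -- side of `W` never crosses.
  suffices (y ∈ W → x ∈ W) ∧ ((x ∈ W ↔ y ∈ W) → Relation.ReflTransGen s x y) from this.2 hxy
  clear hxy
  induction h with
  | refl => exact ⟨id, fun _ => .refl⟩
  | @tail z y _ hzy ih =>
    refine ⟨fun hy => ih.1 (hW z y hzy hy), fun hxy => ?_⟩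
    by_cases hzy' : z ∈ W ↔ y ∈ W
    · exact (ih.2 (hxy.trans hzy'.symm)).tail (hrs z y hzy hzy')
    · have hz : z ∈ W := by
        by_contra hz
        exact hzy' (iff_of_false hz (mt (hW z y hzy) hz))
      exact absurd (hxy.mp (ih.1 hz)) (fun hy => hzy' (iff_of_true hz hy))

section ClosedChain

variable {α β : Type*} {T H : α → β} {R : β → β → Prop}

theorem reflTransGen_along_chain_cons (a : α) (t : List α)
    (hc : (a :: t).IsChain (fun x y => H x = T y)) (hR : ∀ x ∈ a :: t, R (T x) (H x)) :
    ∀ x ∈ a :: t, Relation.ReflTransGen R (T a) (T x) ∧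
      Relation.ReflTransGen R (H x) (H ((a :: t).getLast (List.cons_ne_nil a t))) := by
  induction t generalizing a with
  | nil => simp only [List.mem_singleton, forall_eq]; exact ⟨.refl, .refl⟩
  | cons b t ih =>
    obtain ⟨hab, hc⟩ := List.isChain_cons_cons.mp hc
    have ih := ih b hc fun x hx => hR x (List.mem_cons_of_mem a hx)
    have hab' : Relation.ReflTransGen R (T a) (T b) := hab ▸ .single (hR a List.mem_cons_self)
    rw [List.getLast_cons (List.cons_ne_nil b t)]
    rintro x (_ | ⟨_, hx⟩)
    · exact ⟨.refl, hab ▸ (ih b List.mem_cons_self).2.head (hR b (by simp))⟩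
    · exact ⟨hab'.trans (ih x hx).1, (ih x hx).2⟩

theorem reflTransGen_head_tail_of_closed_chain {l : List α} (hl : l ≠ [])
    (hc : l.IsChain (fun a b => H a = T b)) (hclosed : H (l.getLast hl) = T (l.head hl))
    (hR : ∀ a ∈ l, R (T a) (H a)) (a : α) (ha : a ∈ l) : Relation.ReflTransGen R (H a) (T a) := by
  obtain ⟨b, t, rfl⟩ := List.exists_cons_of_ne_nil hl
  obtain ⟨hba, hab⟩ := reflTransGen_along_chain_cons b t hc hR a ha
  exact hab.trans (hclosed ▸ hba)

end ClosedChain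

theorem flipFour_flipFour (c : Four) : flipFour (flipFour c) = c := by
  cases c <;> rfl

theorem allows_flipFour (c : Four) (b : Bool) : allows (flipFour c) b ↔ allows c (!b) := by
  cases c <;> cases b <;> simp [flipFour, allows]

theorem eq_two_of_allows_of_allows_not {c : Four} {b : Bool} (h : allows c b)
    (h' : allows c (!b)) : c = Four.two := by
  cases c <;> cases b <;> simp_all [allows]

def arcRev (a : E × Bool) : E × Bool := (a.1, !a.2)

theorem arcRev_arcRev (a : E × Bool) : arcRev (arcRev a) = a := by
  simp [arcRev]

theorem mem_reverse_map_arcRev {l : List (E × Bool)} {a : E × Bool} :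
    a ∈ (l.map arcRev).reverse ↔ arcRev a ∈ l := by
  simp only [List.mem_reverse, List.mem_map]
  exact ⟨fun ⟨b, hb, hba⟩ => hba ▸ (arcRev_arcRev b).symm ▸ hb,
    fun h => ⟨arcRev a, h, arcRev_arcRev a⟩⟩

section Walks

variable (src tgt : E → V) (A B : Set (V × V))

@[simp] theorem arcTail_arcRev (a : E × Bool) : arcTail src tgt (arcRev a) = arcHead src tgt a := by
  cases a with | mk e b => cases b <;> rfl

@[simp] theorem arcHead_arcRev (a : E × Bool) : arcHead src tgt (arcRev a) = arcTail src tgt a := by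
  cases a with | mk e b => cases b <;> rfl

def IsClosedWalk (φ : E → Four) (l : List (E × Bool)) : Prop :=
  ∃ h : l ≠ [], l.IsChain (fun a b => arcHead src tgt a = arcTail src tgt b) ∧
    arcHead src tgt (l.getLast h) = arcTail src tgt (l.head h) ∧ ∀ a ∈ l, allows (φ a.1) a.2

variable {src tgt}

theorem IsDirCycle.isClosedWalk {φ : E → Four} {l : List (E × Bool)}
    (hl : IsDirCycle src tgt l) (hφ : ∀ a ∈ l, allows (φ a.1) a.2) :
    IsClosedWalk src tgt φ l :=
  let ⟨hne, hc, hclosed, _⟩ := hl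
  ⟨hne, hc, hclosed, hφ⟩

theorem IsClosedWalk.reach_arcHead_arcTail {φ : E → Four} {l : List (E × Bool)}
    (hw : IsClosedWalk src tgt φ l) {a : E × Bool} (ha : a ∈ l) :
    reach src tgt A B φ (arcHead src tgt a) (arcTail src tgt a) :=
  let ⟨hne, hc, hclosed, hφ⟩ := hw
  reflTransGen_head_tail_of_closed_chain hne hc hclosed
    (fun b hb => Or.inl ⟨b, hφ b hb, rfl, rfl⟩) a ha

variable [DecidableEq E]

theorem revCyc_of_mem (φ : E → Four) {l : List (E × Bool)} {a : E × Bool} (ha : a ∈ l) :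
    revCyc φ l a.1 = flipFour (φ a.1) := by
  have : (a.1, true) ∈ l ∨ (a.1, false) ∈ l := by
    cases a with | mk e b => cases b <;> simp_all
  simp only [revCyc, if_pos this]

theorem revCyc_of_forall_not_mem (φ : E → Four) {l : List (E × Bool)} {e : E}
    (he : ∀ b, (e, b) ∉ l) : revCyc φ l e = φ e := by
  simp only [revCyc, if_neg (not_or_intro (he true) (he false))]

theorem revCyc_revCyc_reverse_map_arcRev (φ : E → Four) (l : List (E × Bool)) :
    revCyc (revCyc φ l) (l.map arcRev).reverse = φ := by
  funext e
  have hmem : ((e, true) ∈ (l.map arcRev).reverse ∨ (e, false) ∈ (l.map arcRev).reverse) ↔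
      ((e, true) ∈ l ∨ (e, false) ∈ l) := by
    simp only [mem_reverse_map_arcRev, arcRev, Bool.not_true, Bool.not_false, or_comm]
  by_cases he : (e, true) ∈ l ∨ (e, false) ∈ l
  · simp only [revCyc, if_pos (hmem.mpr he), if_pos he, flipFour_flipFour]
  · simp only [revCyc, if_neg (mt hmem.mp he), if_neg he]

theorem IsClosedWalk.reverse {φ : E → Four} {l : List (E × Bool)}
    (hw : IsClosedWalk src tgt φ l) :
    IsClosedWalk src tgt (revCyc φ l) (l.map arcRev).reverse := by
  obtain ⟨hne, hc, hclosed, hφ⟩ := hw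
  refine ⟨by simpa using hne, ?_, ?_, fun a ha => ?_⟩
  · rw [List.isChain_reverse, List.isChain_map]
    exact hc.imp fun a b h => by simpa using h.symm
  · simpa [List.getLast_reverse, List.head_reverse, List.getLast_map, List.head_map]
      using hclosed.symm
  · have ha' := mem_reverse_map_arcRev.mp ha
    have hflip := revCyc_of_mem φ ha'
    simp only [arcRev] at hflip ha'
    rw [hflip, allows_flipFour]
    exact hφ _ ha'

theorem IsClosedWalk.reach_revCyc_of_arcStep {φ : E → Four} {l : List (E × Bool)}
    (hw : IsClosedWalk src tgt φ l) {x y : V} (hxy : arcStep src tgt A B φ x y) :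
    reach src tgt A B (revCyc φ l) x y := by
  rcases hxy with ⟨⟨e, b⟩, hφ, rfl, rfl⟩ | hAB
  · by_cases hel : ∃ b', (e, b') ∈ l
    · obtain ⟨b', hb'⟩ := hel
      by_cases hbb : b' = b
      · subst hbb
        have := hw.reverse.reach_arcHead_arcTail A B (a := arcRev (e, b'))
          (mem_reverse_map_arcRev.mpr (by rwa [arcRev_arcRev]))
        rwa [arcHead_arcRev, arcTail_arcRev] at this
      · -- `e` is traversable both ways in `φ`, so it is 2-way and the reversal leaves it alone
        have htwo : φ e = Four.two := by
          refine eq_two_of_allows_of_allows_not hφ ?_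
          exact Bool.eq_not.mpr hbb ▸ hw.2.2.2 _ hb'
        refine .single (Or.inl ⟨(e, b), ?_, rfl, rfl⟩)
        rw [revCyc_of_mem φ hb', htwo]
        trivial
    · refine .single (Or.inl ⟨(e, b), ?_, rfl, rfl⟩)
      rwa [revCyc_of_forall_not_mem φ (not_exists.mp hel)]
  · exact .single (Or.inr hAB)

theorem IsClosedWalk.reach_revCyc_iff {φ : E → Four} {l : List (E × Bool)}
    (hw : IsClosedWalk src tgt φ l) {x y : V} :
    reach src tgt A B (revCyc φ l) x y ↔ reach src tgt A B φ x y := by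
  refine ⟨fun h => ?_, Relation.reflTransGen_closed (fun _ _ => hw.reach_revCyc_of_arcStep A B) x y⟩
  have := Relation.reflTransGen_closed
    (fun _ _ => hw.reverse.reach_revCyc_of_arcStep A B) x y h
  rwa [revCyc_revCyc_reverse_map_arcRev] at this

end Walks

section Cocycles

variable {src tgt : E → V} {A B : Set (V × V)} {φ : E → Four} {V1 : Set V}

theorem not_edgeCrosses_of_mem_iff {a : E × Bool}
    (ha : arcTail src tgt a ∈ V1 ↔ arcHead src tgt a ∈ V1) : ¬ edgeCrosses src tgt V1 a.1 := by
  cases a with | mk e b => cases b <;> simp only [arcTail, arcHead, edgeCrosses] at ha ⊢ <;> tauto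

theorem arcStep_revCut_iff {x y : V} (hxy : x ∈ V1 ↔ y ∈ V1) :
    arcStep src tgt A B (revCut src tgt φ V1) x y ↔ arcStep src tgt A B φ x y := by
  have hsame : ∀ a : E × Bool, arcTail src tgt a = x → arcHead src tgt a = y →
      revCut src tgt φ V1 a.1 = φ a.1 := by
    rintro a rfl rfl
    exact if_neg (not_edgeCrosses_of_mem_iff hxy)
  refine or_congr_left ⟨fun ⟨a, ha, hx, hy⟩ => ⟨a, hsame a hx hy ▸ ha, hx, hy⟩,
    fun ⟨a, ha, hx, hy⟩ => ⟨a, (hsame a hx hy).symm ▸ ha, hx, hy⟩⟩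

theorem IsABCocycleCut.mem_of_arcStep (hcut : IsABCocycleCut src tgt A B φ V1) {x y : V}
    (hxy : arcStep src tgt A B φ x y) (hy : y ∈ V1) : x ∈ V1 := by
  rcases hxy with ⟨a, ha, rfl, rfl⟩ | hAB
  · by_contra hx
    exact hcut.2.1 a ha ⟨hx, hy⟩
  · exact (hcut.2.2 _ hAB).mpr hy

theorem IsABCocycleCut.not_mem_of_arcStep_revCut (hcut : IsABCocycleCut src tgt A B φ V1)
    {x y : V} (hxy : arcStep src tgt A B (revCut src tgt φ V1) x y) (hy : y ∉ V1) : x ∉ V1 := by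
  rcases hxy with ⟨a, ha, rfl, rfl⟩ | hAB
  · intro hx
    have hcross : edgeCrosses src tgt V1 a.1 := by
      cases a with | mk e b =>
        cases b <;> simp only [arcTail, arcHead, edgeCrosses] at hx hy ⊢ <;> tauto
    -- `a` leaves `V1` only because it is the reversal of an arc of `φ` entering `V1`
    simp only [revCut, if_pos hcross, allows_flipFour] at ha
    exact hcut.2.1 (arcRev a) ha (by simpa using ⟨hy, hx⟩)
  · exact fun hx => hy ((hcut.2.2 _ hAB).mp hx)

theorem IsABCocycleCut.reach_revCut_iff (hcut : IsABCocycleCut src tgt A B φ V1) {x y : V}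
    (hxy : x ∈ V1 ↔ y ∈ V1) :
    reach src tgt A B (revCut src tgt φ V1) x y ↔ reach src tgt A B φ x y :=
  ⟨fun h => h.lift_of_mem_iff (W := V1ᶜ) (fun _ _ => hcut.not_mem_of_arcStep_revCut)
      (fun _ _ h hs => (arcStep_revCut_iff (not_iff_not.mp hs)).mp h) (not_iff_not.mpr hxy),
    fun h => h.lift_of_mem_iff (fun _ _ => hcut.mem_of_arcStep)
      (fun _ _ h hs => (arcStep_revCut_iff hs).mpr h) hxy⟩

end Cocycles

section Validity

variable {src tgt : E → V} {A B : Set (V × V)}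

theorem isValid_iff_of_reach_iff {φ ψ : E → Four}
    (h : ∀ p ∈ A ∪ B, reach src tgt A B ψ p.2 p.1 ↔ reach src tgt A B φ p.2 p.1) :
    IsValid src tgt A B ψ ↔ IsValid src tgt A B φ := by
  refine and_congr (forall₂_congr fun p hp => ?_) (forall₂_congr fun p hp => ?_)
  · exact not_congr (h p (Or.inl hp))
  · exact h p (Or.inr hp)

theorem CCStep.reach_iff [DecidableEq E] {φ ψ : E → Four} (hstep : CCStep src tgt A B φ ψ)
    {p : V × V} (hp : p ∈ A ∪ B) :
    reach src tgt A B ψ p.2 p.1 ↔ reach src tgt A B φ p.2 p.1 := by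
  rcases hstep with ⟨l, hcyc, hφ, rfl⟩ | ⟨V1, hcut, rfl⟩
  · exact (hcyc.isClosedWalk hφ).reach_revCyc_iff A B
  · exact hcut.reach_revCut_iff (hcut.2.2 p hp).symm

end Validity

theorem statement9_general {V E : Type*} [DecidableEq E] (src tgt : E → V)
    (A B : Set (V × V)) (φ φ' : E → Four)
    (h : Relation.ReflTransGen (CCStep src tgt A B) φ φ') :
    IsValid src tgt A B φ ↔ IsValid src tgt A B φ' := by
  induction h with
  | refl => rfl
  | tail _ hstep ih => exact ih.trans (isValid_iff_of_reach_iff fun _ => hstep.reach_iff).symm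

/-- If two fourientations `φ, φ'` of `G` are cycle-cocycle equivalent
(one is obtained from the other by repeatedly reversing directed cycles and/or
`(A,B)`-cocycles), then `φ` is `(A,B)`-valid iff `φ'` is `(A,B)`-valid. -/
theorem statement9 {V E : Type*} [Fintype V] [Fintype E] [DecidableEq E] (src tgt : E → V)
    (A B : Set (V × V)) (φ φ' : E → Four)
    (h : Relation.ReflTransGen (CCStep src tgt A B) φ φ') :
    IsValid src tgt A B φ ↔ IsValid src tgt A B φ' :=
  statement9_general src tgt A B φ φ' h

end SubgraphsVsOrientations
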